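/- Every switching class on an odd number of vertices contains a unique graph in which every vertex has even degree. -/

import Mathlib

/-- Seidel switching of a simple graph `Γ` with respect to a set `X` of vertices:
adjacency between `X` and its complement is complemented, adjacency within `X`
or within the complement is unchanged. -/
def switching {Ω : Type*} (X : Set Ω) (Γ : SimpleGraph Ω) : SimpleGraph Ω where
  Adj u v := ((u ∈ X ↔ v ∈ X) ∧ Γ.Adj u v) ∨ (¬(u ∈ X ↔ v ∈ X) ∧ ¬Γ.Adj u v)
  symm := by
    constructor
    intro u v h
    rcases h with ⟨h1, h2⟩ | ⟨h1, h2⟩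
    · exact Or.inl ⟨h1.symm, h2.symm⟩
    · exact Or.inr ⟨fun h => h1 h.symm, fun h => h2 h.symm⟩
  loopless := by
    constructor
    intro u h
    rcases h with ⟨_, h⟩ | ⟨h, _⟩
    · exact Γ.loopless.irrefl u h
    · exact h Iff.rfl

/-!
Switching at `X` flips the adjacency of `v` with exactly the vertices on the other side of `X`, so
the degree of `v` changes parity iff that side has odd size. Switching at the set of odd-degree
vertices, which has even size by the handshake lemma and hence odd complement, therefore makes
every degree even. Conversely, if `Γ` and its switching at `Z` both have all degrees even, then
`Z` and `Zᶜ` both have even size as soon as both are nonempty, which the odd size of `Ω` forbids;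
so the switching is trivial. Since switchings compose by symmetric difference, this gives
uniqueness within the switching class.
-/

open scoped symmDiff

lemma Set.even_ncard_symmDiff_iff {α : Type*} {s t : Set α} (hs : s.Finite) (ht : t.Finite) :
    Even (s ∆ t).ncard ↔ (Even s.ncard ↔ Even t.ncard) := by
  have hsub : s ∩ t ⊆ s ∪ t := Set.inter_subset_left.trans Set.subset_union_left
  have hunion := Set.ncard_union_add_ncard_inter s t hs ht
  have hle := Set.ncard_le_ncard hsub (hs.union ht)
  have hdiff : s ∆ t = (s ∪ t) \ (s ∩ t) := symmDiff_eq_sup_sdiff_inf s t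
  rw [hdiff, Set.ncard_sdiff hsub (hs.inter_of_left t), Nat.even_sub hle]
  grind

section

variable {Ω : Type*}

lemma switching_adj (X : Set Ω) (Γ : SimpleGraph Ω) (u v : Ω) :
    (switching X Γ).Adj u v ↔ ((u ∈ X ↔ v ∈ X) ↔ Γ.Adj u v) := by
  change ((u ∈ X ↔ v ∈ X) ∧ Γ.Adj u v) ∨ (¬(u ∈ X ↔ v ∈ X) ∧ ¬Γ.Adj u v) ↔ _
  tauto

lemma switching_switching (X Y : Set Ω) (Γ : SimpleGraph Ω) :
    switching X (switching Y Γ) = switching (X ∆ Y) Γ := by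
  ext u v
  simp only [switching_adj, Set.mem_symmDiff]
  tauto

lemma switching_empty (Γ : SimpleGraph Ω) : switching ∅ Γ = Γ := by
  ext u v
  simp [switching_adj]

lemma switching_compl (X : Set Ω) (Γ : SimpleGraph Ω) : switching Xᶜ Γ = switching X Γ := by
  ext u v
  simp only [switching_adj, Set.mem_compl_iff]
  tauto

lemma switching_univ (Γ : SimpleGraph Ω) : switching Set.univ Γ = Γ := by
  rw [← Set.compl_empty, switching_compl, switching_empty]

lemma neighborSet_switching_of_mem {X : Set Ω} (Γ : SimpleGraph Ω) {v : Ω} (hv : v ∈ X) :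
    (switching X Γ).neighborSet v = Γ.neighborSet v ∆ Xᶜ := by
  ext u
  simp only [SimpleGraph.mem_neighborSet, switching_adj, Set.mem_symmDiff, Set.mem_compl_iff]
  tauto

lemma even_ncard_neighborSet_switching_of_mem [Finite Ω] {X : Set Ω} (Γ : SimpleGraph Ω) {v : Ω}
    (hv : v ∈ X) :
    Even ((switching X Γ).neighborSet v).ncard ↔
      (Even (Γ.neighborSet v).ncard ↔ Even Xᶜ.ncard) := by
  rw [neighborSet_switching_of_mem Γ hv]
  exact Set.even_ncard_symmDiff_iff (Set.toFinite _) (Set.toFinite _)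

lemma SimpleGraph.even_ncard_setOf_odd_ncard_neighborSet [Finite Ω] (Γ : SimpleGraph Ω) :
    Even {v | Odd (Γ.neighborSet v).ncard}.ncard := by
  classical
  have := Fintype.ofFinite Ω
  convert Γ.even_card_odd_degree_vertices using 2
  rw [Set.ncard_eq_toFinset_card']
  congr 1
  ext v
  simp [← SimpleGraph.card_neighborSet_eq_degree, Set.ncard_eq_toFinset_card']

lemma even_ncard_neighborSet_switching_setOf_odd [Finite Ω] (hodd : Odd (Nat.card Ω))
    (Γ : SimpleGraph Ω) (v : Ω) :
    Even ((switching {v | Odd (Γ.neighborSet v).ncard} Γ).neighborSet v).ncard := by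
  set X := {v | Odd (Γ.neighborSet v).ncard}
  have hX : Even X.ncard := Γ.even_ncard_setOf_odd_ncard_neighborSet
  by_cases hv : v ∈ X
  · have hXc : ¬Even Xᶜ.ncard := by
      rw [← Set.ncard_add_ncard_compl X] at hodd
      grind [Nat.not_even_iff_odd]
    rw [even_ncard_neighborSet_switching_of_mem Γ hv]
    exact iff_of_false (Nat.not_even_iff_odd.mpr hv) hXc
  · rw [← switching_compl, even_ncard_neighborSet_switching_of_mem Γ (Set.mem_compl hv),
      compl_compl]
    exact iff_of_true (Nat.not_odd_iff_even.mp hv) hX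

lemma switching_eq_self_of_even_ncard_neighborSet [Finite Ω] (hodd : Odd (Nat.card Ω))
    {Γ : SimpleGraph Ω} {Z : Set Ω} (hΓ : ∀ v, Even (Γ.neighborSet v).ncard)
    (hZ : ∀ v, Even ((switching Z Γ).neighborSet v).ncard) :
    switching Z Γ = Γ := by
  have hside : ∀ {Y : Set Ω}, switching Y Γ = switching Z Γ → ∀ v ∈ Y, Even Yᶜ.ncard := by
    intro Y hY v hv
    have := even_ncard_neighborSet_switching_of_mem Γ hv
    rw [hY] at this
    exact (this.mp (hZ v)).mp (hΓ v)
  obtain rfl | ⟨v, hv⟩ := Z.eq_empty_or_nonempty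
  · exact switching_empty Γ
  obtain hZc | ⟨w, hw⟩ := Zᶜ.eq_empty_or_nonempty
  · rw [Set.compl_empty_iff.mp hZc, switching_univ]
  have hZc : Even Zᶜ.ncard := hside rfl v hv
  have hZ : Even Zᶜᶜ.ncard := hside (switching_compl Z Γ) w hw
  rw [compl_compl] at hZ
  rw [← Set.ncard_add_ncard_compl Z, ← Nat.not_even_iff_odd] at hodd
  exact absurd (hZ.add hZc) hodd

end

theorem stmt12 {Ω : Type*} [Fintype Ω] (hodd : Odd (Fintype.card Ω))
    (Γ : SimpleGraph Ω) :
    ∃! Γ' : SimpleGraph Ω, (∃ X : Set Ω, switching X Γ = Γ') ∧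
      ∀ v : Ω, Even {u : Ω | Γ'.Adj v u}.ncard := by
  rw [← Nat.card_eq_fintype_card] at hodd
  set X₀ := {v | Odd (Γ.neighborSet v).ncard}
  have hX₀ := even_ncard_neighborSet_switching_setOf_odd hodd Γ
  refine ⟨switching X₀ Γ, ⟨⟨X₀, rfl⟩, hX₀⟩, ?_⟩
  rintro _ ⟨⟨Y, rfl⟩, hY⟩
  have hY' : switching Y Γ = switching (Y ∆ X₀) (switching X₀ Γ) := by
    rw [switching_switching, symmDiff_symmDiff_cancel_right]
  rw [hY'] at hY ⊢
  exact switching_eq_self_of_even_ncard_neighborSet hodd hX₀ hY
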